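/- arXiv:1810.08605 — 2 statements merged into one kernel-verified Lean document; each statement's English description precedes it below -/
import Mathlib

section
/- There exists a constant C > 0 such that for every ρ ∈ P(∂Ω) and every potential φ_ρ ∈ X for ρ (i.e. every minimizer of I_ρ over X), one has (∫_{ℝ^N} |∇φ_ρ|² dx)^{1/2} ≤ C. -/
open MeasureTheory Metric Set Filter Topology Pointwise
open scoped ENNReal NNReal

noncomputable section

abbrev Euc (N : ℕ) := EuclideanSpace ℝ (Fin N)

/-- The set `X` of admissible potentials: Lipschitz with constant 1, vanishing at
infinity, with square-integrable (a.e.-defined) gradient. -/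
def memX (N : ℕ) (φ : Euc N → ℝ) : Prop :=
  LipschitzWith 1 φ ∧ Tendsto φ (cocompact (Euc N)) (𝓝 0) ∧
    Integrable (fun x => ‖gradient φ x‖ ^ 2) (volume : Measure (Euc N))

/-- The Born–Infeld action `I_ρ`. -/
def BIaction (N : ℕ) (ρ : Measure (Euc N)) (φ : Euc N → ℝ) : ℝ :=
  (∫ x, (1 - Real.sqrt (1 - ‖gradient φ x‖ ^ 2))) - ∫ x, φ x ∂ρ

/-- `φ` is a potential for `ρ`: a minimizer of `I_ρ` over `X`. -/
def isPotential (N : ℕ) (ρ : Measure (Euc N)) (φ : Euc N → ℝ) : Prop :=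
  memX N φ ∧ ∀ ψ : Euc N → ℝ, memX N ψ → BIaction N ρ φ ≤ BIaction N ρ ψ

/-- Borel probability measures supported on `∂Ω`. -/
def memP (N : ℕ) (Ω : Set (Euc N)) (ρ : Measure (Euc N)) : Prop :=
  IsProbabilityMeasure ρ ∧ ρ (frontier Ω)ᶜ = 0

/-- Bounded domain. -/
def isBoundedDomain (N : ℕ) (Ω : Set (Euc N)) : Prop :=
  IsOpen Ω ∧ Ω.Nonempty ∧ IsConnected Ω ∧ Bornology.IsBounded Ω

/-- Equilibrium measure with its equilibrium potential. -/
def isEquilibrium (N : ℕ) (Ω : Set (Euc N)) (ρs : Measure (Euc N)) (φs : Euc N → ℝ) : Prop :=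
  memP N Ω ρs ∧ isPotential N ρs φs ∧
    ∀ (μ : Measure (Euc N)) (φμ : Euc N → ℝ), memP N Ω μ → isPotential N μ φμ →
      BIaction N μ φμ ≤ BIaction N ρs φs

/-- The (closed) support of a Borel measure. -/
def msupport (N : ℕ) (ρ : Measure (Euc N)) : Set (Euc N) :=
  {x | ∀ U : Set (Euc N), IsOpen U → x ∈ U → ρ U ≠ 0}

/-- Weak solution of the Born–Infeld equation with datum `ρ`. -/
def isWeakSol (N : ℕ) (ρ : Measure (Euc N)) (φ : Euc N → ℝ) : Prop :=
  ∀ ψ : Euc N → ℝ, ContDiff ℝ (⊤ : ℕ∞) ψ → HasCompactSupport ψ →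
    (∫ x, (inner ℝ (gradient φ x) (gradient ψ x) : ℝ) / Real.sqrt (1 - ‖gradient φ x‖ ^ 2)) =
      ∫ x, ψ x ∂ρ

/-- The `L²`-norm of the gradient. -/
def gradNorm2 (N : ℕ) (φ : Euc N → ℝ) : ℝ :=
  (∫ x, ‖gradient φ x‖ ^ 2) ^ (1/2 : ℝ)

set_option maxHeartbeats 1000000

lemma lintegral_polar (N : ℕ) (hN : 1 ≤ N) (u : Euc N → ℝ≥0∞) (hu : Measurable u) :
    ∫⁻ y, u y = ∫⁻ e, (∫⁻ r in Set.Ioi (0:ℝ),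
        ENNReal.ofReal (r ^ (N-1)) * u (r • (e : Euc N)))
      ∂(volume : Measure (Euc N)).toSphere := by
  haveI : Nonempty (Fin N) := ⟨⟨0, by omega⟩⟩
  haveI : Nontrivial (Euc N) := by
    have h : 0 < Module.finrank ℝ (Euc N) := by
      rw [finrank_euclideanSpace_fin]; omega
    exact Module.nontrivial_of_finrank_pos h
  have hdim : Module.finrank ℝ (Euc N) = N := finrank_euclideanSpace_fin
  have h1 : ∫⁻ y, u y ∂(volume : Measure (Euc N)) =
      ∫⁻ z : ({(0:Euc N)}ᶜ : Set (Euc N)), u z ∂(volume.comap Subtype.val) := by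
    rw [lintegral_subtype_comap (measurableSet_singleton (0:Euc N)).compl,
      restrict_compl_singleton]
  rw [h1]
  have h2 := ((volume : Measure (Euc N)).measurePreserving_homeomorphUnitSphereProd).lintegral_comp_emb
      (Homeomorph.measurableEmbedding _)
      (fun p : sphere (0:Euc N) 1 × Ioi (0:ℝ) => u ((p.2 : ℝ) • (p.1 : Euc N)))
  rw [show (fun z : ({(0:Euc N)}ᶜ : Set (Euc N)) => u z) = fun z =>
      (fun p : sphere (0:Euc N) 1 × Ioi (0:ℝ) => u ((p.2 : ℝ) • (p.1 : Euc N)))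
        (homeomorphUnitSphereProd (Euc N) z) from ?_, h2]
  · rw [MeasureTheory.lintegral_prod _ ?_]
    · refine lintegral_congr fun e => ?_
      rw [Measure.volumeIoiPow,
        lintegral_withDensity_eq_lintegral_mul _ (by fun_prop) (by fun_prop)]
      have h3 : ∀ a : (Ioi (0:ℝ)),
          ((fun r : Ioi (0:ℝ) => ENNReal.ofReal ((r:ℝ) ^ (Module.finrank ℝ (Euc N) - 1))) *
            (fun y : Ioi (0:ℝ) => u ((e, y).2.1 • (e, y).1.1))) a =
          (fun r : ℝ => ENNReal.ofReal (r ^ (N-1)) * u (r • (e : Euc N))) (a : ℝ) := by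
        intro a; simp [hdim]
      rw [lintegral_congr h3]
      exact lintegral_subtype_comap (μ := (volume : Measure ℝ)) measurableSet_Ioi
        (fun r : ℝ => ENNReal.ofReal (r ^ (N-1)) * u (r • (e : Euc N)))
    · fun_prop
  · funext z
    simp only [homeomorphUnitSphereProd_apply_snd_coe, homeomorphUnitSphereProd_apply_fst_coe]
    rw [smul_inv_smul₀ (norm_ne_zero_iff.2 z.2)]


lemma ray_ftc {f : ℝ → ℝ} (hf : LipschitzWith 1 f) {d : ℝ → ℝ≥0∞} (hdm : Measurable d)
    (hd : ∀ᵐ r : ℝ, 0 < r → ∃ c : ℝ, HasDerivAt f c r ∧ ENNReal.ofReal |c| ≤ d r)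
    {b : ℝ} (hb : 0 ≤ b) :
    ENNReal.ofReal (f 0 - f b) ≤ ∫⁻ r in Set.Ioi (0:ℝ), d r := by
  set h : ℝ → ℝ := fun r => r + f r with hh
  have hmono : Monotone h := by
    intro x y hxy
    have h1 := hf.dist_le_mul x y
    rw [Real.dist_eq, Real.dist_eq] at h1
    simp only [NNReal.coe_one, one_mul] at h1
    have h3 : f x - f y ≤ |x - y| := (le_abs_self _).trans h1
    have h2 : |x - y| = y - x := by rw [abs_sub_comm, abs_of_nonneg (by linarith)]
    simp only [h, hh]
    linarith
  have hcont : Continuous h := continuous_id.add hf.continuous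
  have st_eq : ∀ x, hmono.stieltjesFunction x = h x := by
    intro x
    rw [hmono.stieltjesFunction_eq]
    exact rightLim_eq_of_tendsto
      (hcont.continuousAt.mono_left nhdsWithin_le_nhds)
  set μ := hmono.stieltjesFunction.measure with hμ
  have key : ∀ᵐ r : ℝ, 0 < r → (1 : ℝ≥0∞) - d r ≤ μ.rnDeriv volume r := by
    filter_upwards [hmono.ae_hasDerivAt, Measure.rnDeriv_lt_top μ volume, hd]
      with r hder hfin hd' hr
    obtain ⟨c, hc, hcd⟩ := hd' hr
    have h1c : HasDerivAt h (1 + c) r := (hasDerivAt_id r).add hc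
    have heq : (μ.rnDeriv volume r).toReal = 1 + c := h1c.unique hder ▸ rfl
    have heq2 : μ.rnDeriv volume r = ENNReal.ofReal (1 + c) := by
      rw [← heq, ENNReal.ofReal_toReal hfin.ne]
    rw [heq2]
    calc (1:ℝ≥0∞) - d r ≤ 1 - ENNReal.ofReal |c| := tsub_le_tsub_left hcd _
      _ = ENNReal.ofReal 1 - ENNReal.ofReal |c| := by rw [ENNReal.ofReal_one]
      _ = ENNReal.ofReal (1 - |c|) := (ENNReal.ofReal_sub 1 (abs_nonneg c)).symm
      _ ≤ ENNReal.ofReal (1 + c) :=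
        ENNReal.ofReal_le_ofReal (by linarith [neg_abs_le c])
  have step1 : ∫⁻ r in Ioc 0 b, ((1:ℝ≥0∞) - d r) ≤ ENNReal.ofReal (h b - h 0) := by
    calc ∫⁻ r in Ioc 0 b, ((1:ℝ≥0∞) - d r)
        ≤ ∫⁻ r in Ioc 0 b, μ.rnDeriv volume r := by
          refine lintegral_mono_ae ?_
          filter_upwards [ae_restrict_of_ae key, ae_restrict_mem measurableSet_Ioc]
            with r h1 h2 using h1 h2.1
      _ = (volume.withDensity (μ.rnDeriv volume)) (Ioc 0 b) :=
          (withDensity_apply _ measurableSet_Ioc).symm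
      _ ≤ μ (Ioc 0 b) := Measure.le_iff'.1 (Measure.withDensity_rnDeriv_le μ volume) _
      _ = ENNReal.ofReal (h b - h 0) := by
          rw [hμ, StieltjesFunction.measure_Ioc, st_eq, st_eq]
  have step2 : ENNReal.ofReal b - ∫⁻ r in Ioc 0 b, d r ≤ ∫⁻ r in Ioc 0 b, ((1:ℝ≥0∞) - d r) := by
    have := lintegral_sub_le d (fun _ => (1:ℝ≥0∞)) hdm (μ := volume.restrict (Ioc 0 b))
    simpa [Real.volume_Ioc, hb] using this
  by_cases hJ : (∫⁻ r in Ioi (0:ℝ), d r) = ∞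
  · rw [hJ]; exact le_top
  have hJ' : (∫⁻ r in Ioc 0 b, d r) ≤ ∫⁻ r in Ioi (0:ℝ), d r :=
    lintegral_mono_set Ioc_subset_Ioi_self
  have hJfin : (∫⁻ r in Ioc 0 b, d r) ≠ ∞ := ne_top_of_le_ne_top hJ hJ'
  by_cases hsign : f 0 - f b ≤ 0
  · rw [ENNReal.ofReal_eq_zero.2 hsign]; exact bot_le
  push_neg at hsign
  have h0b : 0 ≤ b + f b - f 0 := by
    have := hmono hb
    simp only [h, hh] at this
    linarith
  have hsplit : ENNReal.ofReal b =
      ENNReal.ofReal (b + f b - f 0) + ENNReal.ofReal (f 0 - f b) := by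
    rw [← ENNReal.ofReal_add h0b (by linarith)]
    ring_nf
  have final : ENNReal.ofReal (b + f b - f 0) + ENNReal.ofReal (f 0 - f b)
      ≤ ENNReal.ofReal (b + f b - f 0) + ∫⁻ r in Ioc 0 b, d r := by
    rw [← hsplit]
    have := le_trans step2 step1
    rw [tsub_le_iff_right] at this
    simpa [h, hh, add_comm] using this
  have := (ENNReal.add_le_add_iff_left (a := ENNReal.ofReal (b + f b - f 0))
      ENNReal.ofReal_ne_top).1 final
  exact le_trans this hJ'


lemma norm_gradient_eq {N : ℕ} (φ : Euc N → ℝ) (x : Euc N) :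
    ‖gradient φ x‖ = ‖fderiv ℝ φ x‖ := by
  have : gradient φ x = (InnerProductSpace.toDual ℝ (Euc N)).symm (fderiv ℝ φ x) := rfl
  rw [this, LinearIsometryEquiv.norm_map]

lemma grad_norm_le_one {N : ℕ} {φ : Euc N → ℝ} (hlip : LipschitzWith 1 φ) (x : Euc N) :
    ‖gradient φ x‖ ≤ 1 := by
  rw [norm_gradient_eq]
  simpa using norm_fderiv_le_of_lipschitz ℝ hlip

lemma measurable_gradient' {N : ℕ} (φ : Euc N → ℝ) : Measurable (gradient φ) := by
  have : gradient φ = fun x => (InnerProductSpace.toDual ℝ (Euc N)).symm (fderiv ℝ φ x) := rfl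
  rw [this]
  exact (LinearIsometryEquiv.continuous _).measurable.comp (measurable_fderiv ℝ φ)

lemma key_bound (N : ℕ) (hN : 3 ≤ N) (φ : Euc N → ℝ) (hlip : LipschitzWith 1 φ)
    (hten : Tendsto φ (cocompact (Euc N)) (𝓝 0)) (x₀ : Euc N) :
    ENNReal.ofReal (φ x₀) * (volume : Measure (Euc N)).toSphere univ ≤
      (volume : Measure (Euc N)).toSphere univ +
      (∫⁻ y, ENNReal.ofReal ‖gradient φ y‖ ^ (2:ℝ)) ^ (1/2 : ℝ) *
        ((volume : Measure (Euc N)).toSphere univ * ENNReal.ofReal (1/((N:ℝ)-2))) ^ (1/2 : ℝ) := by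
  haveI : Nonempty (Fin N) := ⟨⟨0, by omega⟩⟩
  set σ := (volume : Measure (Euc N)).toSphere with hσ
  set n := N - 1 with hn
  have hn2 : 2 ≤ n := by omega
  set D : Euc N → ℝ≥0∞ := fun y => ENNReal.ofReal ‖gradient φ y‖ with hD
  have hDmeas : Measurable D := ENNReal.measurable_ofReal.comp (measurable_gradient' φ).norm
  have hDle : ∀ y, D y ≤ 1 := fun y => by
    simpa [hD] using ENNReal.ofReal_le_one.2 (grad_norm_le_one hlip y)
  set w : Euc N → ℝ≥0∞ := fun y => (ENNReal.ofReal ‖y‖ ^ n)⁻¹ with hw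
  have hwmeas : Measurable w :=
    ((ENNReal.measurable_ofReal.comp measurable_norm).pow_const n).inv
  have htrans : Measurable (fun y : Euc N => x₀ + y) :=
    (continuous_const.add continuous_id).measurable
  have hnormsmul : ∀ (r : ℝ), 0 < r → ∀ e : sphere (0:Euc N) 1, ‖r • (e : Euc N)‖ = r := by
    intro r hr e
    rw [norm_smul, mem_sphere_zero_iff_norm.1 e.2, mul_one, Real.norm_eq_abs, abs_of_pos hr]
  -- a.e. differentiability along rays
  have hdiffset : MeasurableSet {z : Euc N | DifferentiableAt ℝ φ z} :=
    measurableSet_of_differentiableAt ℝ φ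
  have hnull : volume {z : Euc N | ¬ DifferentiableAt ℝ φ z} = 0 := by
    have h := hlip.ae_differentiableAt (μ := (volume : Measure (Euc N)))
    rwa [ae_iff] at h
  set u₀ : Euc N → ℝ≥0∞ :=
    fun y => Set.indicator {z : Euc N | ¬ DifferentiableAt ℝ φ z} (fun _ => 1) (x₀ + y) with hu₀
  have hu₀meas : Measurable u₀ :=
    (measurable_const.indicator hdiffset.compl).comp htrans
  have hu₀zero : ∫⁻ y, u₀ y = 0 := by
    have hpre : volume ((fun y : Euc N => x₀ + y) ⁻¹' {z | ¬ DifferentiableAt ℝ φ z}) = 0 := by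
      rw [measure_preimage_add]; exact hnull
    refine (lintegral_eq_zero_iff hu₀meas).2 ?_
    have hthis : ∀ᵐ y ∂(volume : Measure (Euc N)), DifferentiableAt ℝ φ (x₀ + y) := by
      rw [ae_iff]
      exact measure_mono_null (fun y hy => hy) hpre
    filter_upwards [hthis] with y hy
    have : (x₀ + y) ∉ {z : Euc N | ¬ DifferentiableAt ℝ φ z} := by simpa using hy
    simp [hu₀, Set.indicator_of_notMem this]
  have hae : ∀ᵐ e : sphere (0:Euc N) 1 ∂σ, ∀ᵐ r ∂(volume.restrict (Ioi (0:ℝ))),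
      DifferentiableAt ℝ φ (x₀ + r • (e : Euc N)) := by
    have h0 : ∫⁻ e : sphere (0:Euc N) 1,
        (∫⁻ r in Ioi (0:ℝ), ENNReal.ofReal (r ^ n) * u₀ (r • (e : Euc N))) ∂σ = 0 := by
      rw [← lintegral_polar N (by omega) u₀ hu₀meas]
      exact hu₀zero
    have hFmeas : Measurable (fun e : sphere (0:Euc N) 1 =>
        ∫⁻ r in Ioi (0:ℝ), ENNReal.ofReal (r ^ n) * u₀ (r • (e : Euc N))) := by
      apply Measurable.lintegral_prod_right
      exact (ENNReal.measurable_ofReal.comp (measurable_snd.pow_const n)).mul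
        (hu₀meas.comp (measurable_snd.smul measurable_fst.subtype_val))
    have h1 := (lintegral_eq_zero_iff hFmeas).1 h0
    filter_upwards [h1] with e he
    have h2 : (fun r => ENNReal.ofReal (r ^ n) * u₀ (r • (e : Euc N)))
        =ᵐ[volume.restrict (Ioi (0:ℝ))] 0 := by
      refine (lintegral_eq_zero_iff ?_).1 he
      exact (ENNReal.measurable_ofReal.comp (measurable_id.pow_const n)).mul
        (hu₀meas.comp (measurable_id.smul measurable_const))
    filter_upwards [h2, ae_restrict_mem measurableSet_Ioi] with r hr hr0
    simp only [Pi.zero_apply, mul_eq_zero] at hr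
    have hrpos : (0:ℝ) < r := hr0
    rcases hr with h | h
    · exact absurd h (by simp only [ENNReal.ofReal_eq_zero, not_le]; positivity)
    · by_contra hcon
      rw [hu₀] at h
      simp only [Set.indicator_apply_eq_zero, mem_setOf_eq] at h
      exact one_ne_zero (h hcon)
  -- per-ray lower bound
  have hray : ∀ᵐ e : sphere (0:Euc N) 1 ∂σ, ENNReal.ofReal (φ x₀) ≤
      ∫⁻ r in Ioi (0:ℝ), D (x₀ + r • (e : Euc N)) := by
    filter_upwards [hae] with e he
    set f : ℝ → ℝ := fun r => φ (x₀ + r • (e : Euc N)) with hf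
    have henorm : ‖(e : Euc N)‖ = 1 := mem_sphere_zero_iff_norm.1 e.2
    have hflip : LipschitzWith 1 f := by
      have h5 : LipschitzWith 1 (fun r : ℝ => x₀ + r • (e : Euc N)) := by
        refine LipschitzWith.of_dist_le_mul fun x y => ?_
        rw [dist_add_left, dist_eq_norm, ← sub_smul, norm_smul, henorm, mul_one,
          NNReal.coe_one, one_mul, Real.norm_eq_abs, Real.dist_eq]
      have h6 := hlip.comp h5
      have h7 : LipschitzWith 1 (φ ∘ fun r : ℝ => x₀ + r • (e : Euc N)) := by simpa using h6
      exact h7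
    have hdm : Measurable (fun r : ℝ => D (x₀ + r • (e : Euc N))) :=
      hDmeas.comp (continuous_const.add (continuous_id.smul continuous_const)).measurable
    have hd : ∀ᵐ r : ℝ, 0 < r → ∃ c : ℝ, HasDerivAt f c r ∧
        ENNReal.ofReal |c| ≤ D (x₀ + r • (e : Euc N)) := by
      have he' := (ae_restrict_iff' measurableSet_Ioi).1 he
      filter_upwards [he'] with r hdf hr
      have hdiff := hdf hr
      have hline : HasDerivAt (fun s : ℝ => x₀ + s • (e : Euc N)) (e : Euc N) r := by
        simpa using ((hasDerivAt_id r).smul_const (e : Euc N)).const_add x₀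
      refine ⟨(fderiv ℝ φ (x₀ + r • (e : Euc N))) (e : Euc N),
        hdiff.hasFDerivAt.comp_hasDerivAt r hline, ?_⟩
      have h1 : |(fderiv ℝ φ (x₀ + r • (e : Euc N))) (e : Euc N)| ≤
          ‖gradient φ (x₀ + r • (e : Euc N))‖ := by
        rw [norm_gradient_eq]
        simpa [henorm] using (fderiv ℝ φ (x₀ + r • (e : Euc N))).le_opNorm (e : Euc N)
      exact ENNReal.ofReal_le_ofReal h1
    have hbdd : ∀ b : ℝ, 0 ≤ b → ENNReal.ofReal (f 0 - f b) ≤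
        ∫⁻ r in Ioi (0:ℝ), D (x₀ + r • (e : Euc N)) :=
      fun b hb => ray_ftc hflip hdm hd hb
    have htend : Tendsto (fun b : ℝ => f b) atTop (𝓝 0) := by
      apply hten.comp
      apply tendsto_cocompact_of_tendsto_dist_comp_atTop (0 : Euc N)
      have hbnd : ∀ b : ℝ, b - ‖x₀‖ ≤ dist (x₀ + b • (e : Euc N)) 0 := by
        intro b
        rw [dist_zero_right]
        have h2 : ‖b • (e : Euc N)‖ ≤ ‖x₀ + b • (e : Euc N)‖ + ‖x₀‖ := by
          have h3 := norm_add_le (x₀ + b • (e : Euc N)) (-x₀)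
          simpa [add_comm, add_assoc] using h3
        rw [norm_smul, henorm, mul_one, Real.norm_eq_abs] at h2
        have h4 : b ≤ |b| := le_abs_self b
        linarith
      exact tendsto_atTop_mono hbnd (tendsto_atTop_add_const_right atTop _ tendsto_id)
    have hlim : Tendsto (fun b : ℝ => ENNReal.ofReal (f 0 - f b)) atTop
        (𝓝 (ENNReal.ofReal (φ x₀))) := by
      have h1 : Tendsto (fun b : ℝ => f 0 - f b) atTop (𝓝 (φ x₀)) := by
        have h2 := (tendsto_const_nhds (x := f 0) (f := atTop (α := ℝ))).sub htend
        simpa [hf] using h2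
      exact (ENNReal.continuous_ofReal.tendsto _).comp h1
    refine le_of_tendsto hlim ?_
    filter_upwards [eventually_ge_atTop (0:ℝ)] with b hb
    exact hbdd b hb
  -- polar computation for the main integrand
  have hmeas_main : Measurable (fun y => D (x₀ + y) * w y) :=
    (hDmeas.comp htrans).mul hwmeas
  have hmain : ∫⁻ y, D (x₀ + y) * w y =
      ∫⁻ e : sphere (0:Euc N) 1, (∫⁻ r in Ioi (0:ℝ), D (x₀ + r • (e : Euc N))) ∂σ := by
    rw [lintegral_polar N (by omega) _ hmeas_main]
    refine lintegral_congr fun e => setLIntegral_congr_fun measurableSet_Ioi ?_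
    intro r hr
    have hr' : (0:ℝ) < r := hr
    have h1 : ENNReal.ofReal ‖r • (e : Euc N)‖ = ENNReal.ofReal r := by
      rw [hnormsmul r hr' e]
    have h2 : ENNReal.ofReal (r ^ n) = ENNReal.ofReal r ^ n := ENNReal.ofReal_pow hr'.le n
    have h3 : ENNReal.ofReal r ^ n ≠ 0 := pow_ne_zero _ (by simp [ENNReal.ofReal_eq_zero]; positivity)
    have h4 : ENNReal.ofReal r ^ n ≠ ⊤ := by
      exact ENNReal.pow_ne_top ENNReal.ofReal_ne_top
    simp only [hw, h1]
    rw [h2, mul_comm (D (x₀ + r • (e : Euc N))), ← mul_assoc,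
      ENNReal.mul_inv_cancel h3 h4, one_mul]
  -- lower bound
  have hlower : ENNReal.ofReal (φ x₀) * σ univ ≤ ∫⁻ y, D (x₀ + y) * w y := by
    rw [hmain]
    calc ENNReal.ofReal (φ x₀) * σ univ
        = ∫⁻ _e : sphere (0:Euc N) 1, ENNReal.ofReal (φ x₀) ∂σ := (lintegral_const _).symm
      _ ≤ _ := lintegral_mono_ae hray
  -- upper bound, part 1 : near the origin
  have hball : ∫⁻ y in ball (0:Euc N) 1, w y = σ univ := by
    have hind : Measurable ((ball (0:Euc N) 1).indicator w) :=
      hwmeas.indicator measurableSet_ball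
    rw [← lintegral_indicator measurableSet_ball, lintegral_polar N (by omega) _ hind]
    have hinner : ∀ e : sphere (0:Euc N) 1,
        (∫⁻ r in Ioi (0:ℝ), ENNReal.ofReal (r ^ n) *
          (ball (0:Euc N) 1).indicator w (r • (e : Euc N))) = 1 := by
      intro e
      have hcongr : ∀ r ∈ Ioi (0:ℝ), ENNReal.ofReal (r ^ n) *
          (ball (0:Euc N) 1).indicator w (r • (e : Euc N)) =
          (Ioo (0:ℝ) 1).indicator (fun _ => 1) r := by
        intro r hr
        have hr' : (0:ℝ) < r := hr
        have h2 : ENNReal.ofReal (r ^ n) = ENNReal.ofReal r ^ n := ENNReal.ofReal_pow hr'.le n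
        have h3 : ENNReal.ofReal r ^ n ≠ 0 :=
          pow_ne_zero _ (by simp [ENNReal.ofReal_eq_zero]; positivity)
        have h4 : ENNReal.ofReal r ^ n ≠ ⊤ := ENNReal.pow_ne_top ENNReal.ofReal_ne_top
        have hmem : r • (e : Euc N) ∈ ball (0:Euc N) 1 ↔ r < 1 := by
          rw [mem_ball_zero_iff, hnormsmul r hr' e]
        by_cases hcase : r < 1
        · have hL : (ball (0:Euc N) 1).indicator w (r • (e : Euc N)) = w (r • (e : Euc N)) :=
            Set.indicator_of_mem (hmem.2 hcase) w
          have hR : (Ioo (0:ℝ) 1).indicator (fun _ => (1:ℝ≥0∞)) r = 1 :=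
            Set.indicator_of_mem (show r ∈ Ioo (0:ℝ) 1 from ⟨hr', hcase⟩) _
          rw [hL, hR]
          simp only [hw, hnormsmul r hr' e]
          rw [h2, ENNReal.mul_inv_cancel h3 h4]
        · have hL : (ball (0:Euc N) 1).indicator w (r • (e : Euc N)) = 0 :=
            Set.indicator_of_notMem (fun hc => hcase (hmem.1 hc)) w
          have hR : (Ioo (0:ℝ) 1).indicator (fun _ => (1:ℝ≥0∞)) r = 0 :=
            Set.indicator_of_notMem (fun hc => hcase hc.2) _
          rw [hL, hR, mul_zero]
      rw [setLIntegral_congr_fun measurableSet_Ioi hcongr]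
      rw [lintegral_indicator measurableSet_Ioo, Measure.restrict_restrict measurableSet_Ioo]
      have : Ioo (0:ℝ) 1 ∩ Ioi 0 = Ioo 0 1 := inter_eq_left.2 (fun x hx => hx.1)
      rw [this]
      simp [Real.volume_Ioo]
    calc ∫⁻ e : sphere (0:Euc N) 1, (∫⁻ r in Ioi (0:ℝ), ENNReal.ofReal (r ^ n) *
          (ball (0:Euc N) 1).indicator w (r • (e : Euc N))) ∂σ
        = ∫⁻ _e : sphere (0:Euc N) 1, 1 ∂σ := lintegral_congr fun e => hinner e
      _ = σ univ := by rw [lintegral_one]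
  -- upper bound, part 2 : far field weight
  have hfar : ∫⁻ y in (ball (0:Euc N) 1)ᶜ, w y ^ (2:ℝ) = σ univ * ENNReal.ofReal (1/((N:ℝ)-2)) := by
    have hwm2 : Measurable fun y => w y ^ (2:ℝ) := hwmeas.pow_const _
    have hind : Measurable (((ball (0:Euc N) 1)ᶜ).indicator (fun y => w y ^ (2:ℝ))) :=
      hwm2.indicator measurableSet_ball.compl
    rw [← lintegral_indicator measurableSet_ball.compl, lintegral_polar N (by omega) _ hind]
    have hinner : ∀ e : sphere (0:Euc N) 1,
        (∫⁻ r in Ioi (0:ℝ), ENNReal.ofReal (r ^ n) *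
          ((ball (0:Euc N) 1)ᶜ).indicator (fun y => w y ^ (2:ℝ)) (r • (e : Euc N))) =
          ENNReal.ofReal (1/((N:ℝ)-2)) := by
      intro e
      have hcongr : ∀ r ∈ Ioi (0:ℝ), ENNReal.ofReal (r ^ n) *
          ((ball (0:Euc N) 1)ᶜ).indicator (fun y => w y ^ (2:ℝ)) (r • (e : Euc N)) =
          (Ici (1:ℝ)).indicator (fun r => ENNReal.ofReal (r ^ (-(n:ℝ)))) r := by
        intro r hr
        have hr' : (0:ℝ) < r := hr
        have h2 : ENNReal.ofReal (r ^ n) = ENNReal.ofReal r ^ n := ENNReal.ofReal_pow hr'.le n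
        have h3 : ENNReal.ofReal r ^ n ≠ 0 :=
          pow_ne_zero _ (by simp [ENNReal.ofReal_eq_zero]; positivity)
        have h4 : ENNReal.ofReal r ^ n ≠ ⊤ := ENNReal.pow_ne_top ENNReal.ofReal_ne_top
        have hmem : r • (e : Euc N) ∈ (ball (0:Euc N) 1)ᶜ ↔ 1 ≤ r := by
          rw [mem_compl_iff, mem_ball_zero_iff, hnormsmul r hr' e, not_lt]
        by_cases hcase : 1 ≤ r
        · have hL : ((ball (0:Euc N) 1)ᶜ).indicator (fun y => w y ^ (2:ℝ)) (r • (e : Euc N)) =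
              w (r • (e : Euc N)) ^ (2:ℝ) := Set.indicator_of_mem (hmem.2 hcase) _
          have hR : (Ici (1:ℝ)).indicator (fun r => ENNReal.ofReal (r ^ (-(n:ℝ)))) r =
              ENNReal.ofReal (r ^ (-(n:ℝ))) := Set.indicator_of_mem hcase _
          rw [hL, hR]
          simp only [hw, hnormsmul r hr' e]
          have hrpow : ((ENNReal.ofReal r ^ n)⁻¹ : ℝ≥0∞) ^ (2:ℝ) = (ENNReal.ofReal r ^ n)⁻¹ ^ (2:ℕ) := by
            rw [← ENNReal.rpow_natCast ((ENNReal.ofReal r ^ n)⁻¹) 2]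
            norm_num
          rw [h2, hrpow]
          have : ENNReal.ofReal r ^ n * ((ENNReal.ofReal r ^ n)⁻¹) ^ (2:ℕ) =
              (ENNReal.ofReal r ^ n)⁻¹ := by
            rw [pow_two, ← mul_assoc, ENNReal.mul_inv_cancel h3 h4, one_mul]
          rw [this, ← ENNReal.ofReal_pow hr'.le n, ← ENNReal.ofReal_inv_of_pos (by positivity)]
          congr 1
          rw [← Real.rpow_natCast r n, ← Real.rpow_neg hr'.le]
        · have hL : ((ball (0:Euc N) 1)ᶜ).indicator (fun y => w y ^ (2:ℝ)) (r • (e : Euc N)) = 0 :=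
            Set.indicator_of_notMem (fun hc => hcase (hmem.1 hc)) _
          have hR : (Ici (1:ℝ)).indicator (fun r => ENNReal.ofReal (r ^ (-(n:ℝ)))) r = 0 :=
            Set.indicator_of_notMem (by simpa using hcase) _
          rw [hL, hR, mul_zero]
      rw [setLIntegral_congr_fun measurableSet_Ioi hcongr]
      rw [lintegral_indicator measurableSet_Ici, Measure.restrict_restrict measurableSet_Ici]
      have hIci : Ici (1:ℝ) ∩ Ioi 0 = Ici 1 := inter_eq_left.2 (fun x hx => mem_Ioi.2 (lt_of_lt_of_le one_pos hx))
      rw [hIci]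
      have hIoi : ∫⁻ r in Ici (1:ℝ), ENNReal.ofReal (r ^ (-(n:ℝ))) =
          ∫⁻ r in Ioi (1:ℝ), ENNReal.ofReal (r ^ (-(n:ℝ))) :=
        setLIntegral_congr (Ioi_ae_eq_Ici (a := (1:ℝ))).symm
      rw [hIoi]
      have hlt : (-(n:ℝ)) < -1 := by
        have h7 : (2:ℝ) ≤ (n:ℝ) := by exact_mod_cast hn2
        linarith
      have hint : IntegrableOn (fun r : ℝ => r ^ (-(n:ℝ))) (Ioi 1) :=
        integrableOn_Ioi_rpow_of_lt hlt one_pos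
      have hnn : 0 ≤ᵐ[volume.restrict (Ioi (1:ℝ))] fun r : ℝ => r ^ (-(n:ℝ)) := by
        filter_upwards [ae_restrict_mem measurableSet_Ioi] with r hr
        exact Real.rpow_nonneg (le_of_lt (lt_trans one_pos hr)) _
      have hval : ∫ r in Ioi (1:ℝ), r ^ (-(n:ℝ)) = 1/((N:ℝ)-2) := by
        rw [integral_Ioi_rpow_of_lt hlt one_pos, Real.one_rpow]
        have hNn : (n:ℝ) = (N:ℝ) - 1 := by
          rw [hn]; push_cast [Nat.cast_sub (by omega : 1 ≤ N)]; ring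
        have h8 : (N:ℝ) ≥ 3 := by exact_mod_cast hN
        rw [hNn, div_eq_div_iff (by linarith) (by linarith)]
        ring
      rw [← ofReal_integral_eq_lintegral_ofReal hint hnn, hval]
    calc ∫⁻ e : sphere (0:Euc N) 1, (∫⁻ r in Ioi (0:ℝ), ENNReal.ofReal (r ^ n) *
          ((ball (0:Euc N) 1)ᶜ).indicator (fun y => w y ^ (2:ℝ)) (r • (e : Euc N))) ∂σ
        = ∫⁻ _e : sphere (0:Euc N) 1, ENNReal.ofReal (1/((N:ℝ)-2)) ∂σ :=
          lintegral_congr fun e => hinner e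
      _ = σ univ * ENNReal.ofReal (1/((N:ℝ)-2)) := by rw [lintegral_const, mul_comm]
  -- translation invariance of the gradient L²-mass
  have htransinv : ∫⁻ y, D (x₀ + y) ^ (2:ℝ) = ∫⁻ y, D y ^ (2:ℝ) := by
    exact (measurePreserving_add_left volume x₀).lintegral_comp
      (hDmeas.pow_const _)
  -- Hölder on the far field
  have hconj : Real.HolderConjugate 2 2 := Real.HolderConjugate.two_two
  have hholder := ENNReal.lintegral_mul_le_Lp_mul_Lq
    (volume.restrict (ball (0:Euc N) 1)ᶜ) hconj
    ((hDmeas.comp htrans).aemeasurable) (hwmeas.aemeasurable)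
  have hfar2 : ∫⁻ y in (ball (0:Euc N) 1)ᶜ, D (x₀ + y) * w y ≤
      (∫⁻ y, D y ^ (2:ℝ)) ^ (1/2:ℝ) *
        (σ univ * ENNReal.ofReal (1/((N:ℝ)-2))) ^ (1/2:ℝ) := by
    refine le_trans hholder ?_
    rw [hfar]
    refine mul_le_mul_left (ENNReal.rpow_le_rpow ?_ (by norm_num)) _
    rw [← htransinv]
    exact setLIntegral_le_lintegral _ _
  -- combine
  have hnear : ∫⁻ y in ball (0:Euc N) 1, D (x₀ + y) * w y ≤ σ univ := by
    rw [← hball]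
    refine lintegral_mono fun y => ?_
    calc D (x₀ + y) * w y ≤ 1 * w y := mul_le_mul_left (hDle _) _
      _ = w y := one_mul _
  calc ENNReal.ofReal (φ x₀) * σ univ ≤ ∫⁻ y, D (x₀ + y) * w y := hlower
    _ = (∫⁻ y in ball (0:Euc N) 1, D (x₀ + y) * w y) +
        ∫⁻ y in (ball (0:Euc N) 1)ᶜ, D (x₀ + y) * w y :=
          (lintegral_add_compl _ measurableSet_ball).symm
    _ ≤ σ univ + (∫⁻ y, D y ^ (2:ℝ)) ^ (1/2:ℝ) *
        (σ univ * ENNReal.ofReal (1/((N:ℝ)-2))) ^ (1/2:ℝ) := add_le_add hnear hfar2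


lemma memX_zero (N : ℕ) : memX N (fun _ => 0) := by
  refine ⟨(LipschitzWith.const 0).weaken zero_le_one, tendsto_const_nhds, ?_⟩
  have : (fun x : Euc N => ‖gradient (fun _ => (0:ℝ)) x‖ ^ 2) = fun _ => 0 := by
    funext x
    rw [gradient_fun_const]
    simp
  rw [this]
  exact integrable_zero _ _ _

lemma action_zero (N : ℕ) (ρ : Measure (Euc N)) : BIaction N ρ (fun _ => 0) = 0 := by
  have h1 : (fun x : Euc N => 1 - Real.sqrt (1 - ‖gradient (fun _ => (0:ℝ)) x‖ ^ 2))
      = fun _ => 0 := by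
    funext x
    rw [gradient_fun_const]
    simp
  rw [BIaction, h1]
  simp


/-- There is a constant C > 0 bounding the L2-gradient norm of every potential
of every probability measure on the boundary of a bounded domain. -/
theorem stmt_2 (N : ℕ) (hN : 3 ≤ N) (Ω : Set (Euc N)) (hΩ : isBoundedDomain N Ω) :
    ∃ C : ℝ, 0 < C ∧ ∀ (ρ : Measure (Euc N)) (φ : Euc N → ℝ),
      memP N Ω ρ → isPotential N ρ φ → gradNorm2 N φ ≤ C := by
  obtain ⟨hopen, hne, hconn, hbdd⟩ := hΩ
  haveI : Nonempty (Fin N) := ⟨⟨0, by omega⟩⟩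
  haveI hnontriv : Nontrivial (Euc N) := by
    have h : 0 < Module.finrank ℝ (Euc N) := by
      rw [finrank_euclideanSpace_fin]; omega
    exact Module.nontrivial_of_finrank_pos h
  -- the sphere measure constant
  set σu : ℝ≥0∞ := (volume : Measure (Euc N)).toSphere univ with hσu
  have hσfin : σu ≠ ⊤ := measure_ne_top _ _
  have hσne : σu ≠ 0 := by
    rw [hσu, Measure.toSphere_apply_univ, finrank_euclideanSpace_fin]
    refine mul_ne_zero (by simp; omega) ?_
    exact (measure_ball_pos volume (0:Euc N) one_pos).ne'
  set σR : ℝ := σu.toReal with hσR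
  have hσRpos : 0 < σR := ENNReal.toReal_pos hσne hσfin
  set K : ℝ := (σR * (1/((N:ℝ)-2))) ^ (1/2:ℝ) / σR with hK
  have hKnn : 0 ≤ K := by
    apply div_nonneg _ hσRpos.le
    apply Real.rpow_nonneg
    have h9 : (3:ℝ) ≤ (N:ℝ) := by exact_mod_cast hN
    exact mul_nonneg hσRpos.le (div_nonneg zero_le_one (by linarith))
  refine ⟨2*K + 2, by linarith, ?_⟩
  rintro ρ φ ⟨hprob, hsupp⟩ ⟨⟨hlip, hten, hgint⟩, hmin⟩
  haveI := hprob
  -- the frontier is a nonempty compact set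
  have hKcl : IsClosed (frontier Ω) := isClosed_frontier
  have hKbd : Bornology.IsBounded (frontier Ω) :=
    (hbdd.closure).subset frontier_subset_closure
  have hKcpt : IsCompact (frontier Ω) := Metric.isCompact_of_isClosed_isBounded hKcl hKbd
  have hKne : (frontier Ω).Nonempty := by
    by_contra h
    rw [not_nonempty_iff_eq_empty] at h
    rcases frontier_eq_empty_iff.1 h with h1 | h1
    · exact absurd h1 (Set.nonempty_iff_ne_empty.1 hne)
    · have hcpt : IsCompact (univ : Set (Euc N)) := by
        have := Metric.isCompact_of_isClosed_isBounded isClosed_univ (h1 ▸ hbdd)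
        exact this
      exact NoncompactSpace.noncompact_univ (X := Euc N) hcpt
  -- maximum of φ on the frontier
  have hφcont : Continuous φ := hlip.continuous
  obtain ⟨x₀, hx₀K, hx₀max⟩ := hKcpt.exists_isMaxOn hKne hφcont.continuousOn
  set M : ℝ := φ x₀ with hM
  -- a.e. with respect to ρ, points lie on the frontier
  have haeK : ∀ᵐ x ∂ρ, x ∈ frontier Ω := by
    rw [ae_iff]
    exact measure_mono_null (fun x hx => hx) hsupp
  -- φ is ρ-integrable
  obtain ⟨x₁, _, hx₁max⟩ := hKcpt.exists_isMaxOn hKne (continuous_abs.comp hφcont).continuousOn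
  have hφint : Integrable φ ρ := by
    refine Integrable.mono' (integrable_const |φ x₁|) hφcont.aestronglyMeasurable ?_
    filter_upwards [haeK] with x hx
    exact hx₁max hx
  -- the ρ-integral of φ is at most M
  have hintM : ∫ x, φ x ∂ρ ≤ M := by
    have h1 : ∫ x, φ x ∂ρ ≤ ∫ _x, M ∂ρ := by
      refine integral_mono_ae hφint (integrable_const M) ?_
      filter_upwards [haeK] with x hx
      exact hx₀max hx
    simpa using h1
  -- pointwise bounds on the Born–Infeld integrand
  set g : Euc N → ℝ := fun x => ‖gradient φ x‖ ^ 2 with hg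
  have hg01 : ∀ x, 0 ≤ g x ∧ g x ≤ 1 := fun x =>
    ⟨sq_nonneg _, by
      have h2 := grad_norm_le_one hlip x
      have h3 := norm_nonneg (gradient φ x)
      show ‖gradient φ x‖ ^ 2 ≤ 1
      nlinarith⟩
  set h : Euc N → ℝ := fun x => 1 - Real.sqrt (1 - g x) with hh
  have hpt : ∀ x, g x / 2 ≤ h x ∧ h x ≤ g x ∧ 0 ≤ h x := by
    intro x
    obtain ⟨h0, h1⟩ := hg01 x
    have hs := Real.sq_sqrt (show (0:ℝ) ≤ 1 - g x by linarith)
    have hsn := Real.sqrt_nonneg (1 - g x)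
    have hs1 : Real.sqrt (1 - g x) ≤ 1 := Real.sqrt_le_one.2 (by linarith)
    have hsn' := Real.sqrt_nonneg (1 - g x)
    refine ⟨?_, ?_, ?_⟩
    · show g x / 2 ≤ 1 - Real.sqrt (1 - g x)
      nlinarith [sq_nonneg (1 - Real.sqrt (1 - g x))]
    · show 1 - Real.sqrt (1 - g x) ≤ g x
      nlinarith
    · show 0 ≤ 1 - Real.sqrt (1 - g x)
      linarith
  have hhmeas : AEStronglyMeasurable h (volume : Measure (Euc N)) := by
    apply Measurable.aestronglyMeasurable
    exact measurable_const.sub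
      ((measurable_const.sub ((measurable_gradient' φ).norm.pow_const 2)).sqrt)
  have hhint : Integrable h (volume : Measure (Euc N)) := by
    refine Integrable.mono' hgint hhmeas (ae_of_all _ fun x => ?_)
    rw [Real.norm_eq_abs, abs_of_nonneg (hpt x).2.2]
    exact (hpt x).2.1
  -- from minimality against 0
  have hmin0 : BIaction N ρ φ ≤ 0 := by
    have := hmin (fun _ => 0) (memX_zero N)
    rwa [action_zero] at this
  have hIle : (∫ x, g x) / 2 ≤ ∫ x, φ x ∂ρ := by
    have h1 : ∫ x, h x ≤ ∫ x, φ x ∂ρ := by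
      have := hmin0
      rw [BIaction] at this
      linarith
    have h2 : (∫ x, g x) / 2 ≤ ∫ x, h x := by
      have h3 : ∫ x, g x / 2 ≤ ∫ x, h x :=
        integral_mono (hgint.div_const 2) hhint fun x => (hpt x).1
      rwa [integral_div] at h3
    linarith
  set I : ℝ := ∫ x, g x with hI
  have hI0 : 0 ≤ I := integral_nonneg fun x => (hg01 x).1
  have hI2M : I ≤ 2 * M := by
    have := le_trans hIle hintM
    linarith
  -- if M is nonpositive, the gradient vanishes
  by_cases hMsign : M ≤ 0
  · have hI00 : I = 0 := le_antisymm (by linarith) hI0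
    rw [gradNorm2]
    have : (∫ x, ‖gradient φ x‖ ^ 2) = I := rfl
    rw [this, hI00, Real.zero_rpow (by norm_num)]
    positivity
  push_neg at hMsign
  -- translate key_bound into a real inequality
  have hkey := key_bound N hN φ hlip hten x₀
  have hLeq : (∫⁻ y, ENNReal.ofReal ‖gradient φ y‖ ^ (2:ℝ)) = ENNReal.ofReal I := by
    have h1 : ∀ y : Euc N, ENNReal.ofReal ‖gradient φ y‖ ^ (2:ℝ) = ENNReal.ofReal (g y) := by
      intro y
      rw [show ((2:ℝ)) = ((2:ℕ):ℝ) by norm_num, ENNReal.rpow_natCast,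
        ← ENNReal.ofReal_pow (norm_nonneg _)]
    rw [lintegral_congr h1, ← ofReal_integral_eq_lintegral_ofReal hgint
      (ae_of_all _ fun x => (hg01 x).1)]
  rw [hLeq] at hkey
  -- take toReal of both sides
  have hRHSfin : σu + (ENNReal.ofReal I) ^ (1/2:ℝ) *
      (σu * ENNReal.ofReal (1/((N:ℝ)-2))) ^ (1/2:ℝ) ≠ ⊤ := by
    refine ENNReal.add_ne_top.2 ⟨hσfin, ?_⟩
    refine ENNReal.mul_ne_top ?_ ?_
    · exact ENNReal.rpow_ne_top_of_nonneg (by norm_num) ENNReal.ofReal_ne_top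
    · exact ENNReal.rpow_ne_top_of_nonneg (by norm_num)
        (ENNReal.mul_ne_top hσfin ENNReal.ofReal_ne_top)
  have hreal : M * σR ≤ σR + I ^ (1/2:ℝ) * (σR * (1/((N:ℝ)-2))) ^ (1/2:ℝ) := by
    have h1 := ENNReal.toReal_mono hRHSfin hkey
    rw [ENNReal.toReal_mul, ENNReal.toReal_ofReal hMsign.le] at h1
    rw [ENNReal.toReal_add hσfin (by
      refine ENNReal.mul_ne_top ?_ ?_
      · exact ENNReal.rpow_ne_top_of_nonneg (by norm_num) ENNReal.ofReal_ne_top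
      · exact ENNReal.rpow_ne_top_of_nonneg (by norm_num)
          (ENNReal.mul_ne_top hσfin ENNReal.ofReal_ne_top))] at h1
    rw [ENNReal.toReal_mul, ← ENNReal.toReal_rpow, ← ENNReal.toReal_rpow,
      ENNReal.toReal_ofReal hI0, ENNReal.toReal_mul, ENNReal.toReal_ofReal (by
        have h9 : (3:ℝ) ≤ (N:ℝ) := by exact_mod_cast hN
        exact div_nonneg zero_le_one (by linarith))] at h1
    exact h1
  -- conclude with elementary algebra
  set X : ℝ := I ^ (1/2:ℝ) with hX
  have hXnn : 0 ≤ X := Real.rpow_nonneg hI0 _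
  have hX2 : X ^ 2 = I := by
    rw [hX, ← Real.rpow_natCast (I ^ (1/2:ℝ)) 2, ← Real.rpow_mul hI0]
    norm_num
  have hMle : M ≤ 1 + K * X := by
    have h5 : M ≤ (σR + (σR * (1/((N:ℝ)-2))) ^ (1/2:ℝ) * X) / σR := by
      rw [le_div_iff₀ hσRpos]
      calc M * σR ≤ σR + X * (σR * (1/((N:ℝ)-2))) ^ (1/2:ℝ) := hreal
        _ = σR + (σR * (1/((N:ℝ)-2))) ^ (1/2:ℝ) * X := by ring
    have h6 : (σR + (σR * (1/((N:ℝ)-2))) ^ (1/2:ℝ) * X) / σR = 1 + K * X := by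
      rw [hK]
      field_simp
    linarith
  have hXle : X ≤ 2*K + 2 := by
    have h4 : X ^ 2 ≤ 2 + 2 * K * X := by
      rw [hX2]
      nlinarith
    nlinarith [sq_nonneg (X - 2*K - 2)]
  rw [gradNorm2]
  exact hXle
end
end

section
/- For all φ, ψ ∈ X the functional J satisfies the Clarkson-type inequality J((φ − ψ)/2) + J((φ + ψ)/2) ≤ (J(φ) + J(ψ))/2. -/
open MeasureTheory Metric Set Filter Topology Pointwise

noncomputable section

set_option maxHeartbeats 1000000

-- concavity of sqrt along a segment
lemma sqrt_concave_seg {x y l : ℝ} (hx : 0 ≤ x) (hy : 0 ≤ y) (hl0 : 0 ≤ l) (hl1 : l ≤ 1) :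
    (1 - l) * Real.sqrt x + l * Real.sqrt y ≤ Real.sqrt ((1 - l) * x + l * y) := by
  have hsx := Real.sqrt_nonneg x
  have hsy := Real.sqrt_nonneg y
  have h1 := Real.sq_sqrt hx
  have h2 := Real.sq_sqrt hy
  have harg : 0 ≤ (1 - l) * x + l * y :=
    add_nonneg (mul_nonneg (by linarith) hx) (mul_nonneg hl0 hy)
  have hL : 0 ≤ (1 - l) * Real.sqrt x + l * Real.sqrt y :=
    add_nonneg (mul_nonneg (by linarith) hsx) (mul_nonneg hl0 hsy)
  rw [show (1 - l) * Real.sqrt x + l * Real.sqrt y ≤ Real.sqrt ((1 - l) * x + l * y) ↔ _ from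
    Real.le_sqrt hL harg]
  nlinarith [sq_nonneg (Real.sqrt x - Real.sqrt y), mul_nonneg hl0 (sub_nonneg.2 hl1)]

lemma key_scalar {sa sb u v : ℝ} (hsa0 : 0 ≤ sa) (hsa1 : sa ≤ 1) (hsb0 : 0 ≤ sb)
    (hsb1 : sb ≤ 1) (hu : 0 ≤ u) (hv : 0 ≤ v)
    (hsum : u + v = 1 - (sa ^ 2 + sb ^ 2) / 2) :
    1 + (sa + sb) / 2 ≤ Real.sqrt (1 - u) + Real.sqrt (1 - v) := by
  set m := (sa + sb) / 2 with hm
  set d := (sa - sb) / 2 with hd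
  have hm0 : 0 ≤ m := by simp [hm]; linarith
  have hm1 : m ≤ 1 := by simp [hm]; linarith
  have hmd : m ^ 2 + d ^ 2 = (sa ^ 2 + sb ^ 2) / 2 := by simp [hm, hd]; ring
  set t := u + m ^ 2 with ht
  have hveq : 1 - v = t + d ^ 2 := by rw [ht]; nlinarith
  have hueq : 1 - u = 1 + m ^ 2 - t := by rw [ht]; ring
  have htlow : m ^ 2 ≤ t := by rw [ht]; linarith
  have hthigh : t ≤ 1 - d ^ 2 := by nlinarith
  have hd2 : 0 ≤ d ^ 2 := sq_nonneg d
  rw [hveq, hueq]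
  by_cases hcase : 1 - m ^ 2 = 0
  · -- then t = 1, d = 0
    have ht1 : t = 1 := by nlinarith
    have hdz : d ^ 2 = 0 := by nlinarith
    have hmeq : m = 1 := by nlinarith
    rw [ht1, hdz, hmeq]
    norm_num
  · have hm2lt : m ^ 2 < 1 := lt_of_le_of_ne (by nlinarith) (fun h => hcase (by linarith))
    set l := (t - m ^ 2) / (1 - m ^ 2) with hl
    have hden : 0 < 1 - m ^ 2 := by linarith
    have hl0 : 0 ≤ l := div_nonneg (by linarith) (by linarith)
    have hl1 : l ≤ 1 := by
      rw [hl, div_le_one hden]; linarith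
    have e1 : 1 + m ^ 2 - t = (1 - l) * 1 + l * m ^ 2 := by
      rw [hl]; linear_combination (div_mul_cancel₀ (t - m ^ 2) hden.ne' : (t - m ^ 2) / (1 - m ^ 2) * (1 - m ^ 2) = t - m ^ 2)
    have e2 : t + d ^ 2 = (1 - l) * (m ^ 2 + d ^ 2) + l * (1 + d ^ 2) := by
      rw [hl]; linear_combination -(div_mul_cancel₀ (t - m ^ 2) hden.ne' : (t - m ^ 2) / (1 - m ^ 2) * (1 - m ^ 2) = t - m ^ 2)
    rw [e1, e2]
    have c1 := sqrt_concave_seg (x := 1) (y := m ^ 2) zero_le_one (sq_nonneg m) hl0 hl1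
    have c2 := sqrt_concave_seg (x := m ^ 2 + d ^ 2) (y := 1 + d ^ 2)
      (by positivity) (by positivity) hl0 hl1
    rw [Real.sqrt_one, Real.sqrt_sq hm0] at c1
    have b1 : m ≤ Real.sqrt (m ^ 2 + d ^ 2) := by
      rw [Real.le_sqrt hm0 (by positivity)]; linarith
    have b2 : (1 : ℝ) ≤ Real.sqrt (1 + d ^ 2) :=
      (Real.le_sqrt zero_le_one (by positivity)).2 (by nlinarith)
    nlinarith [mul_le_mul_of_nonneg_left b1 (show (0:ℝ) ≤ 1 - l by linarith),
      mul_le_mul_of_nonneg_left b2 hl0]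

lemma keyA {F : Type*} [NormedAddCommGroup F] [InnerProductSpace ℝ F] (a b : F)
    (ha : ‖a‖ ≤ 1) (hb : ‖b‖ ≤ 1) :
    (1 - Real.sqrt (1 - ‖(2⁻¹ : ℝ) • (a - b)‖ ^ 2)) +
      (1 - Real.sqrt (1 - ‖(2⁻¹ : ℝ) • (a + b)‖ ^ 2)) ≤
    ((1 - Real.sqrt (1 - ‖a‖ ^ 2)) + (1 - Real.sqrt (1 - ‖b‖ ^ 2))) / 2 := by
  set sa := Real.sqrt (1 - ‖a‖ ^ 2) with hsa
  set sb := Real.sqrt (1 - ‖b‖ ^ 2) with hsb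
  have hna : 0 ≤ ‖a‖ := norm_nonneg a
  have hnb : 0 ≤ ‖b‖ := norm_nonneg b
  have hsa2 : sa ^ 2 = 1 - ‖a‖ ^ 2 := Real.sq_sqrt (by nlinarith)
  have hsb2 : sb ^ 2 = 1 - ‖b‖ ^ 2 := Real.sq_sqrt (by nlinarith)
  have hsa0 : 0 ≤ sa := Real.sqrt_nonneg _
  have hsb0 : 0 ≤ sb := Real.sqrt_nonneg _
  have hsa1 : sa ≤ 1 := Real.sqrt_le_one.2 (by nlinarith)
  have hsb1 : sb ≤ 1 := Real.sqrt_le_one.2 (by nlinarith)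
  have hnormp : ‖(2⁻¹ : ℝ) • (a + b)‖ ^ 2 = ‖a + b‖ ^ 2 / 4 := by
    rw [norm_smul]; simp [norm_inv]; ring
  have hnormm : ‖(2⁻¹ : ℝ) • (a - b)‖ ^ 2 = ‖a - b‖ ^ 2 / 4 := by
    rw [norm_smul]; simp [norm_inv]; ring
  have hpar := parallelogram_law_with_norm ℝ a b
  have hsum : ‖(2⁻¹ : ℝ) • (a + b)‖ ^ 2 + ‖(2⁻¹ : ℝ) • (a - b)‖ ^ 2
      = 1 - (sa ^ 2 + sb ^ 2) / 2 := by
    rw [hnormp, hnormm, hsa2, hsb2]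
    nlinarith [hpar]
  have := key_scalar hsa0 hsa1 hsb0 hsb1 (sq_nonneg _) (sq_nonneg _) hsum
  linarith


section helpers

variable {N : ℕ}

lemma grad_norm_eq (f : Euc N → ℝ) (x : Euc N) : ‖gradient f x‖ = ‖fderiv ℝ f x‖ :=
  LinearIsometryEquiv.norm_map _ _

lemma gradBound {f : Euc N → ℝ} (hf : LipschitzWith 1 f) (x : Euc N) :
    ‖gradient f x‖ ≤ 1 := by
  rw [grad_norm_eq]
  simpa using norm_fderiv_le_of_lipschitz ℝ hf

lemma measGrad (f : Euc N → ℝ) :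
    Measurable (fun x => 1 - Real.sqrt (1 - ‖gradient f x‖ ^ 2)) := by
  have h0 : Measurable (fun x => gradient f x) :=
    ((InnerProductSpace.toDual ℝ (Euc N)).symm.continuous.measurable).comp
      (measurable_fderiv ℝ f)
  have h1 : Measurable (fun x => ‖gradient f x‖ ^ 2) := h0.norm.pow_const 2
  exact measurable_const.sub
    ((Real.continuous_sqrt.measurable).comp (measurable_const.sub h1))

lemma h_nonneg (g : Euc N) : 0 ≤ 1 - Real.sqrt (1 - ‖g‖ ^ 2) := by
  have : Real.sqrt (1 - ‖g‖ ^ 2) ≤ 1 := Real.sqrt_le_one.2 (by nlinarith [sq_nonneg ‖g‖])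
  linarith

lemma h_le {g : Euc N} (hg : ‖g‖ ≤ 1) : 1 - Real.sqrt (1 - ‖g‖ ^ 2) ≤ ‖g‖ ^ 2 := by
  have h0 : (0:ℝ) ≤ 1 - ‖g‖ ^ 2 := by nlinarith [norm_nonneg g]
  have h1 : (1:ℝ) - ‖g‖ ^ 2 ≤ 1 := by nlinarith [norm_nonneg g]
  have := (Real.le_sqrt h0 h0).2 (by nlinarith)
  linarith

lemma lip_half_add {φ ψ : Euc N → ℝ} (h1 : LipschitzWith 1 φ) (h2 : LipschitzWith 1 ψ) :
    LipschitzWith 1 (fun x => (φ x + ψ x) / 2) := by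
  apply LipschitzWith.of_dist_le_mul
  intro x y
  have a1 := h1.dist_le_mul x y
  have a2 := h2.dist_le_mul x y
  rw [Real.dist_eq] at a1 a2 ⊢
  have key : |(φ x + ψ x) / 2 - (φ y + ψ y) / 2| ≤ (|φ x - φ y| + |ψ x - ψ y|) / 2 := by
    have := abs_add_le (φ x - φ y) (ψ x - ψ y)
    calc |(φ x + ψ x) / 2 - (φ y + ψ y) / 2| = |(φ x - φ y) + (ψ x - ψ y)| / 2 := by
          rw [show (φ x + ψ x) / 2 - (φ y + ψ y) / 2 = ((φ x - φ y) + (ψ x - ψ y)) / 2 by ring,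
            abs_div, abs_of_pos (show (0:ℝ) < 2 by norm_num)]
      _ ≤ (|φ x - φ y| + |ψ x - ψ y|) / 2 := by linarith
  simp only [NNReal.coe_one, one_mul] at a1 a2 ⊢
  linarith

lemma lip_half_sub {φ ψ : Euc N → ℝ} (h1 : LipschitzWith 1 φ) (h2 : LipschitzWith 1 ψ) :
    LipschitzWith 1 (fun x => (φ x - ψ x) / 2) := by
  have := lip_half_add h1 (h2.neg)
  simpa [sub_eq_add_neg] using this

lemma grad_half_add {φ ψ : Euc N → ℝ} {x : Euc N} (h1 : DifferentiableAt ℝ φ x)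
    (h2 : DifferentiableAt ℝ ψ x) :
    gradient (fun y => (φ y + ψ y) / 2) x = (2⁻¹ : ℝ) • (gradient φ x + gradient ψ x) := by
  have H0 := (h1.hasFDerivAt.add h2.hasFDerivAt).const_smul (2⁻¹ : ℝ)
  have H : HasFDerivAt (fun y => (φ y + ψ y) / 2)
      ((2⁻¹ : ℝ) • (fderiv ℝ φ x + fderiv ℝ ψ x)) x := by
    exact H0.congr_of_eventuallyEq (Filter.Eventually.of_forall fun y =>
      show (φ y + ψ y) / 2 = 2⁻¹ * (φ y + ψ y) by ring)
  show (InnerProductSpace.toDual ℝ (Euc N)).symm (fderiv ℝ _ x) = _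
  rw [H.fderiv, _root_.map_smul, map_add]
  rfl

lemma grad_half_sub {φ ψ : Euc N → ℝ} {x : Euc N} (h1 : DifferentiableAt ℝ φ x)
    (h2 : DifferentiableAt ℝ ψ x) :
    gradient (fun y => (φ y - ψ y) / 2) x = (2⁻¹ : ℝ) • (gradient φ x - gradient ψ x) := by
  have H0 := (h1.hasFDerivAt.sub h2.hasFDerivAt).const_smul (2⁻¹ : ℝ)
  have H : HasFDerivAt (fun y => (φ y - ψ y) / 2)
      ((2⁻¹ : ℝ) • (fderiv ℝ φ x - fderiv ℝ ψ x)) x := by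
    exact H0.congr_of_eventuallyEq (Filter.Eventually.of_forall fun y =>
      show (φ y - ψ y) / 2 = 2⁻¹ * (φ y - ψ y) by ring)
  show (InnerProductSpace.toDual ℝ (Euc N)).symm (fderiv ℝ _ x) = _
  rw [H.fderiv, _root_.map_smul, map_sub]
  rfl

end helpers

section main

variable {N : ℕ}

lemma clarkson (φ ψ : Euc N → ℝ) (lφ : LipschitzWith 1 φ) (lψ : LipschitzWith 1 ψ)
    (iφ : Integrable (fun x => ‖gradient φ x‖ ^ 2) (volume : Measure (Euc N)))
    (iψ : Integrable (fun x => ‖gradient ψ x‖ ^ 2) (volume : Measure (Euc N))) :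
    (∫ x, (1 - Real.sqrt (1 - ‖gradient (fun x => (φ x - ψ x) / 2) x‖ ^ 2))) +
      (∫ x, (1 - Real.sqrt (1 - ‖gradient (fun x => (φ x + ψ x) / 2) x‖ ^ 2))) ≤
    ((∫ x, (1 - Real.sqrt (1 - ‖gradient φ x‖ ^ 2))) +
      (∫ x, (1 - Real.sqrt (1 - ‖gradient ψ x‖ ^ 2)))) / 2 := by
  have radφ : ∀ᵐ x ∂(volume : Measure (Euc N)), DifferentiableAt ℝ φ x :=
    lφ.ae_differentiableAt
  have radψ : ∀ᵐ x ∂(volume : Measure (Euc N)), DifferentiableAt ℝ ψ x :=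
    lψ.ae_differentiableAt
  have lm := lip_half_sub lφ lψ
  have lp := lip_half_add lφ lψ
  have Iφ : Integrable (fun x => 1 - Real.sqrt (1 - ‖gradient φ x‖ ^ 2))
      (volume : Measure (Euc N)) :=
    iφ.mono' (measGrad φ).aestronglyMeasurable (ae_of_all _ fun x => by
      rw [Real.norm_eq_abs, abs_of_nonneg (h_nonneg _)]; exact h_le (gradBound lφ x))
  have Iψ : Integrable (fun x => 1 - Real.sqrt (1 - ‖gradient ψ x‖ ^ 2))
      (volume : Measure (Euc N)) :=
    iψ.mono' (measGrad ψ).aestronglyMeasurable (ae_of_all _ fun x => by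
      rw [Real.norm_eq_abs, abs_of_nonneg (h_nonneg _)]; exact h_le (gradBound lψ x))
  have bound : Integrable (fun x => ‖gradient φ x‖ ^ 2 + ‖gradient ψ x‖ ^ 2)
      (volume : Measure (Euc N)) := iφ.add iψ
  have Im : Integrable (fun x => 1 - Real.sqrt
      (1 - ‖gradient (fun y => (φ y - ψ y) / 2) x‖ ^ 2)) (volume : Measure (Euc N)) := by
    refine bound.mono' (measGrad _).aestronglyMeasurable ?_
    filter_upwards [radφ, radψ] with x d1 d2
    rw [Real.norm_eq_abs, abs_of_nonneg (h_nonneg _)]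
    refine le_trans (h_le (gradBound lm x)) ?_
    rw [grad_half_sub d1 d2, norm_smul]
    simp only [norm_inv, Real.norm_ofNat]
    nlinarith [mul_self_le_mul_self (norm_nonneg (gradient φ x - gradient ψ x))
        (norm_sub_le (gradient φ x) (gradient ψ x)),
      sq_nonneg (‖gradient φ x‖ - ‖gradient ψ x‖), norm_nonneg (gradient φ x - gradient ψ x)]
  have Ip : Integrable (fun x => 1 - Real.sqrt
      (1 - ‖gradient (fun y => (φ y + ψ y) / 2) x‖ ^ 2)) (volume : Measure (Euc N)) := by
    refine bound.mono' (measGrad _).aestronglyMeasurable ?_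
    filter_upwards [radφ, radψ] with x d1 d2
    rw [Real.norm_eq_abs, abs_of_nonneg (h_nonneg _)]
    refine le_trans (h_le (gradBound lp x)) ?_
    rw [grad_half_add d1 d2, norm_smul]
    simp only [norm_inv, Real.norm_ofNat]
    nlinarith [mul_self_le_mul_self (norm_nonneg (gradient φ x + gradient ψ x))
        (norm_add_le (gradient φ x) (gradient ψ x)),
      sq_nonneg (‖gradient φ x‖ - ‖gradient ψ x‖), norm_nonneg (gradient φ x + gradient ψ x)]
  have hae : (fun x => (1 - Real.sqrt (1 - ‖gradient (fun y => (φ y - ψ y) / 2) x‖ ^ 2)) +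
        (1 - Real.sqrt (1 - ‖gradient (fun y => (φ y + ψ y) / 2) x‖ ^ 2))) ≤ᵐ[volume]
      (fun x => ((1 - Real.sqrt (1 - ‖gradient φ x‖ ^ 2)) +
        (1 - Real.sqrt (1 - ‖gradient ψ x‖ ^ 2))) / 2) := by
    filter_upwards [radφ, radψ] with x d1 d2
    rw [grad_half_sub d1 d2, grad_half_add d1 d2]
    exact keyA _ _ (gradBound lφ x) (gradBound lψ x)
  have mono := integral_mono_ae (Im.add Ip) ((Iφ.add Iψ).div_const 2) hae
  simp only [Pi.add_apply] at mono
  rw [integral_add Im Ip, integral_div, integral_add Iφ Iψ] at mono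
  exact mono

end main

/-- The functional J(φ) = ∫ (1 − √(1 − |∇φ|²)) dx satisfies the Clarkson-type inequality
J((φ−ψ)/2) + J((φ+ψ)/2) ≤ (J(φ) + J(ψ))/2 on X. -/
theorem stmt_4 (N : ℕ) (hN : 3 ≤ N)
    (J : (Euc N → ℝ) → ℝ)
    (hJ : ∀ φ : Euc N → ℝ, J φ = ∫ x, (1 - Real.sqrt (1 - ‖gradient φ x‖ ^ 2)))
    (φ ψ : Euc N → ℝ) (hφ : memX N φ) (hψ : memX N ψ) :
    J (fun x => (φ x - ψ x) / 2) + J (fun x => (φ x + ψ x) / 2) ≤ (J φ + J ψ) / 2 := by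
  rw [hJ, hJ, hJ, hJ]
  exact clarkson φ ψ hφ.1 hψ.1 hφ.2.2 hψ.2.2
end
end
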